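/- arXiv:2004.05163 — 3 statements merged into one kernel-verified Lean document; each statement's English description precedes it below -/
import Mathlib

section
/- Let F : ℝ → ℝ be differentiable with f = F′, and suppose f is differentiable with |f′(x)| ≤ L for all x ∈ ℝ. Then for all real numbers a, b, c, setting m = (3b − c)/2, one has F(a) − F(b) − f(m)(a − b) ≤ (L/4)((a − b)² + (a − 2b + c)²) + (L/4)(b − c)². -/
/-!
If `f' ≤ L`, then `t ↦ F t - f m * (t - m) - L / 2 * (t - m) ^ 2` has derivative
`(L * m - f m) - (L * t - f t)`, which changes sign from `≥ 0` to `≤ 0` at `m`; so the tangent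
line of `F` at `m` plus `L / 2 * (t - m) ^ 2` lies above `F`. Since `|f'| ≤ L`, this applies to
both `F` and `-F`. With `m = (3b - c)/2` it bounds `F a - F b - f m * (a - b)` by
`L / 2 * ((a - m) ^ 2 + (b - m) ^ 2)`, where `a - m = ((a - b) + (a - 2b + c)) / 2` and
`b - m = (c - b) / 2`.
-/

theorem monotone_mul_sub_of_deriv_le {f : ℝ → ℝ} {L : ℝ}
    (hf : Differentiable ℝ f) (hL : ∀ x, deriv f x ≤ L) :
    Monotone fun t => L * t - f t := by
  refine monotone_of_deriv_nonneg (by fun_prop) fun t => ?_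
  rw [deriv_fun_sub (by fun_prop) (hf t), deriv_const_mul_field', deriv_id'']
  linarith [hL t]

theorem sub_sub_mul_sub_le_half_mul_sq {F f : ℝ → ℝ} {L : ℝ}
    (hF : ∀ x, HasDerivAt F (f x) x) (hf : Monotone fun t => L * t - f t) (m x : ℝ) :
    F x - F m - f m * (x - m) ≤ L / 2 * (x - m) ^ 2 := by
  set u : ℝ → ℝ := fun t => F t - f m * (t - m) - L / 2 * (t - m) ^ 2
  have hu (t : ℝ) : HasDerivAt u ((L * m - f m) - (L * t - f t)) t := by
    have := ((hF t).fun_sub (((hasDerivAt_id' t).sub_const m).const_mul (f m))).fun_sub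
      ((((hasDerivAt_id' t).sub_const m).fun_pow 2).const_mul (L / 2))
    exact this.congr_deriv (by ring)
  have hmax : IsMaxOn u Set.univ m := by
    refine isMaxOn_univ_of_deriv (hu m).continuousAt
      (fun t _ => (hu t).differentiableAt.differentiableWithinAt)
      (fun t _ => (hu t).differentiableAt.differentiableWithinAt) (fun t ht => ?_) fun t ht => ?_
    · rw [(hu t).deriv, sub_nonneg]
      exact hf ht.le
    · rw [(hu t).deriv, sub_nonpos]
      exact hf ht.le
  have hux : u x ≤ u m := hmax (Set.mem_univ x)
  simp only [u, sub_self, mul_zero, sub_zero] at hux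
  linarith

theorem stmt_3 (F f : ℝ → ℝ) (L : ℝ)
    (hF : ∀ x, HasDerivAt F (f x) x)
    (hf : Differentiable ℝ f)
    (hL : ∀ x, |deriv f x| ≤ L)
    (a b c : ℝ) :
    F a - F b - f ((3 * b - c) / 2) * (a - b) ≤
      (L / 4) * ((a - b) ^ 2 + (a - 2 * b + c) ^ 2) + (L / 4) * (b - c) ^ 2 := by
  have hupper := sub_sub_mul_sub_le_half_mul_sq hF
    (monotone_mul_sub_of_deriv_le hf fun x => (le_abs_self _).trans (hL x)) ((3 * b - c) / 2) a
  have hlower := sub_sub_mul_sub_le_half_mul_sq (fun x => (hF x).neg)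
    (monotone_mul_sub_of_deriv_le (f := -f) hf.neg fun x => by
      simpa only [deriv.neg] using (neg_le_abs _).trans (hL x)) ((3 * b - c) / 2) b
  simp only [Pi.neg_apply] at hlower
  have hL0 : 0 ≤ L := (abs_nonneg _).trans (hL 0)
  linear_combination hupper + hlower + mul_nonneg hL0 (sq_nonneg (b - c)) / 4
end

section
/- Let g : ℝ → ℝ be twice continuously differentiable, let t ∈ ℝ and τ > 0. Then |g(t + τ) − 2g(t) + g(t − τ)|² ≤ (2τ³/3) ∫_{t−τ}^{t+τ} |g″(s)|² ds. -/
/-!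
Integrating by parts twice (Taylor's formula with integral remainder, expanded from `t` towards
`t + τ` and towards `t - τ`) represents the second difference as `∫ (τ - |s - t|) g''(s) ds`
over `[t - τ, t + τ]`. Cauchy–Schwarz then bounds its square by `∫ (τ - |s - t|)² · ∫ g''²`,
and the hat kernel has `∫ (τ - |s - t|)² = 2τ³/3`.
-/

open Set intervalIntegral
open MeasureTheory (volume)

theorem taylor_integral_remainder_one {g g' g'' : ℝ → ℝ} {a b : ℝ}
    (hg : ∀ x ∈ uIcc a b, HasDerivAt g (g' x) x)
    (hg' : ∀ x ∈ uIcc a b, HasDerivAt g' (g'' x) x)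
    (hg'' : IntervalIntegrable g'' volume a b) :
    ∫ s in a..b, (b - s) * g'' s = g b - g a - (b - a) * g' a := by
  have hg'_int : IntervalIntegrable g' volume a b :=
    ContinuousOn.intervalIntegrable fun x hx => (hg' x hx).continuousAt.continuousWithinAt
  have hparts := integral_mul_deriv_eq_deriv_mul
    (fun x _ => (hasDerivAt_id' x).const_sub b) hg' intervalIntegrable_const hg''
  rw [hparts]
  simp only [neg_one_mul, integral_neg, integral_eq_sub_of_hasDerivAt hg hg'_int]
  ring

theorem sq_intervalIntegral_mul_le {f h : ℝ → ℝ} {a b : ℝ} (hab : a ≤ b)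
    (hf : IntervalIntegrable (fun s => f s ^ 2) volume a b)
    (hh : IntervalIntegrable (fun s => h s ^ 2) volume a b)
    (hfh : IntervalIntegrable (fun s => f s * h s) volume a b) :
    (∫ s in a..b, f s * h s) ^ 2 ≤ (∫ s in a..b, f s ^ 2) * ∫ s in a..b, h s ^ 2 := by
  -- The quadratic `x ↦ ∫ (x f - h)²` is nonnegative, so its discriminant is nonpositive.
  have hquad : ∀ x : ℝ, 0 ≤ (∫ s in a..b, f s ^ 2) * (x * x) +
      (-2 * ∫ s in a..b, f s * h s) * x + ∫ s in a..b, h s ^ 2 := by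
    intro x
    have hexp : ∫ s in a..b, (x * f s - h s) ^ 2 = (∫ s in a..b, f s ^ 2) * (x * x) +
        (-2 * ∫ s in a..b, f s * h s) * x + ∫ s in a..b, h s ^ 2 := by
      have hsplit : ∀ s, (x * f s - h s) ^ 2 =
          (x * x) * f s ^ 2 + (-2 * x) * (f s * h s) + h s ^ 2 := fun s => by ring
      simp only [hsplit]
      rw [integral_add ((hf.const_mul _).add (hfh.const_mul _)) hh,
        integral_add (hf.const_mul _) (hfh.const_mul _), integral_const_mul,
        integral_const_mul]
      ring
    exact hexp ▸ integral_nonneg hab fun s _ => sq_nonneg _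
  have := discrim_le_zero hquad
  rw [discrim] at this
  linarith

theorem integral_hat_mul_eq_second_difference {g g' g'' : ℝ → ℝ} {t τ : ℝ} (hτ : 0 ≤ τ)
    (hg : ∀ x, HasDerivAt g (g' x) x) (hg' : ∀ x, HasDerivAt g' (g'' x) x)
    (hg'' : IntervalIntegrable g'' volume (t - τ) (t + τ)) :
    ∫ s in (t - τ)..(t + τ), (τ - |s - t|) * g'' s = g (t + τ) - 2 * g t + g (t - τ) := by
  have hleft : t - τ ≤ t := by linarith
  have hright : t ≤ t + τ := by linarith
  have hk : Continuous fun s => τ - |s - t| := by fun_prop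
  have hint : ∀ {c d}, c ∈ uIcc (t - τ) (t + τ) → d ∈ uIcc (t - τ) (t + τ) →
      IntervalIntegrable (fun s => (τ - |s - t|) * g'' s) volume c d := fun hc hd =>
    ((hg''.continuousOn_mul hk.continuousOn).mono_set (uIcc_subset_uIcc hc hd))
  have hg''_sub : ∀ {c d}, c ∈ uIcc (t - τ) (t + τ) → d ∈ uIcc (t - τ) (t + τ) →
      IntervalIntegrable g'' volume c d := fun hc hd => hg''.mono_set (uIcc_subset_uIcc hc hd)
  have ht : t ∈ uIcc (t - τ) (t + τ) := by
    rw [uIcc_of_le (hleft.trans hright)]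
    exact ⟨hleft, hright⟩
  have hlo : t - τ ∈ uIcc (t - τ) (t + τ) := left_mem_uIcc
  have hhi : t + τ ∈ uIcc (t - τ) (t + τ) := right_mem_uIcc
  have hfuture : ∫ s in t..(t + τ), (τ - |s - t|) * g'' s =
      ∫ s in t..(t + τ), (t + τ - s) * g'' s := by
    refine integral_congr fun s hs => ?_
    rw [uIcc_of_le hright] at hs
    rw [abs_of_nonneg (by linarith [hs.1])]
    ring
  -- On `[t - τ, t]` the kernel is that of the Taylor expansion from `t` to `t - τ`.
  have hpast : ∫ s in (t - τ)..t, (τ - |s - t|) * g'' s =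
      ∫ s in t..(t - τ), (t - τ - s) * g'' s := by
    rw [integral_symm, ← integral_neg]
    refine integral_congr fun s hs => ?_
    rw [uIcc_of_ge hleft] at hs
    rw [abs_of_nonpos (by linarith [hs.2])]
    ring
  rw [← integral_add_adjacent_intervals (hint hlo ht) (hint ht hhi), hfuture, hpast,
    taylor_integral_remainder_one (fun x _ => hg x) (fun x _ => hg' x) (hg''_sub ht hlo),
    taylor_integral_remainder_one (fun x _ => hg x) (fun x _ => hg' x) (hg''_sub ht hhi)]
  ring

theorem integral_hat_sq (t : ℝ) {τ : ℝ} (hτ : 0 ≤ τ) :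
    ∫ s in (t - τ)..(t + τ), (τ - |s - t|) ^ 2 = 2 * τ ^ 3 / 3 := by
  have hk : Continuous fun s => (τ - |s - t|) ^ 2 := by fun_prop
  have hfuture : ∫ s in t..(t + τ), (τ - |s - t|) ^ 2 = τ ^ 3 / 3 := by
    rw [integral_congr (g := fun s => (t + τ - s) ^ 2) fun s hs => ?_]
    · norm_num [integral_comp_sub_left (fun x => x ^ 2)]
    rw [uIcc_of_le (by linarith)] at hs
    rw [abs_of_nonneg (by linarith [hs.1])]
    ring
  have hpast : ∫ s in (t - τ)..t, (τ - |s - t|) ^ 2 = τ ^ 3 / 3 := by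
    rw [integral_congr (g := fun s => (s - (t - τ)) ^ 2) fun s hs => ?_]
    · norm_num [integral_comp_sub_right (fun x => x ^ 2)]
    rw [uIcc_of_le (by linarith)] at hs
    rw [abs_of_nonpos (by linarith [hs.2])]
    ring
  rw [← integral_add_adjacent_intervals (b := t) (hk.intervalIntegrable _ _)
    (hk.intervalIntegrable _ _), hfuture, hpast]
  ring

theorem stmt_8 (g : ℝ → ℝ) (hg : ContDiff ℝ 2 g) (t τ : ℝ) (hτ : 0 < τ) :
    |g (t + τ) - 2 * g t + g (t - τ)| ^ 2 ≤
      (2 * τ ^ 3 / 3) * ∫ s in (t - τ)..(t + τ), |deriv (deriv g) s| ^ 2 := by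
  have hg' : ContDiff ℝ 1 (deriv g) := hg.iterate_deriv' 1 1
  have hg'' : Continuous (deriv (deriv g)) := (hg.iterate_deriv' 0 2).continuous
  have hk : Continuous fun s => τ - |s - t| := by fun_prop
  calc |g (t + τ) - 2 * g t + g (t - τ)| ^ 2
      = (∫ s in (t - τ)..(t + τ), (τ - |s - t|) * deriv (deriv g) s) ^ 2 := by
        rw [sq_abs, integral_hat_mul_eq_second_difference hτ.le
          (fun x => (hg.differentiable two_ne_zero x).hasDerivAt)
          (fun x => (hg'.differentiable one_ne_zero x).hasDerivAt) (hg''.intervalIntegrable _ _)]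
    _ ≤ (∫ s in (t - τ)..(t + τ), (τ - |s - t|) ^ 2) *
          ∫ s in (t - τ)..(t + τ), deriv (deriv g) s ^ 2 :=
        sq_intervalIntegral_mul_le (by linarith) ((hk.pow 2).intervalIntegrable _ _)
          ((hg''.pow 2).intervalIntegrable _ _) ((hk.mul hg'').intervalIntegrable _ _)
    _ = (2 * τ ^ 3 / 3) * ∫ s in (t - τ)..(t + τ), |deriv (deriv g) s| ^ 2 := by
        simp only [integral_hat_sq t hτ.le, sq_abs]
end

section
/- Let g : ℝ → ℝ be twice continuously differentiable, let t ∈ ℝ and τ > 0. Then |(3g(t + τ) + g(t − τ))/4 − g(t + τ/2)|² ≤ 2τ³ ∫_{t−τ}^{t+τ} |g″(s)|² ds. -/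
/-!
Expanding `g` by Taylor's formula with integral remainder around the midpoint `c = t + τ/2`,
the weights `3/4` and `1/4` make the constant and first-order terms cancel, leaving
`(3 R₊ + R₋)/4` with `R₊ = ∫_c^{t+τ} (t + τ - s) g''(s) ds` and
`R₋ = ∫_c^{t-τ} (t - τ - s) g''(s) ds`. Bounding the kernels by `τ/2` and `3τ/2` gives
`|error| ≤ (3τ/8) ∫_{t-τ}^{t+τ} |g''|`, and the Cauchy–Schwarz (Jensen) inequality on an
interval of length `2τ` turns this into the `L²` bound.
-/

open MeasureTheory Set

theorem sq_intervalIntegral_le {f : ℝ → ℝ} {a b : ℝ} (hab : a ≤ b)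
    (hf : IntervalIntegrable f volume a b)
    (hf2 : IntervalIntegrable (fun s ↦ f s ^ 2) volume a b) :
    (∫ s in a..b, f s) ^ 2 ≤ (b - a) * ∫ s in a..b, f s ^ 2 := by
  rcases hab.eq_or_lt with rfl | hlt
  · simp
  have hvol : volume (Ioc a b) = ENNReal.ofReal (b - a) := Real.volume_Ioc
  have jensen := even_two.convexOn_pow.map_set_average_le (continuous_pow 2).continuousOn
    isClosed_univ (by simp [hvol, hlt]) (by simp [hvol]) (.of_forall fun _ ↦ mem_univ _)
    hf.1 hf2.1
  simp only [setAverage_eq, measureReal_def, hvol, ENNReal.toReal_ofReal (sub_nonneg.2 hab),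
    smul_eq_mul, ← intervalIntegral.integral_of_le hab] at jensen
  have hba : b - a ≠ 0 := (sub_pos.2 hlt).ne'
  calc (∫ s in a..b, f s) ^ 2 = (b - a) ^ 2 * ((b - a)⁻¹ * ∫ s in a..b, f s) ^ 2 := by
        field_simp
    _ ≤ (b - a) ^ 2 * ((b - a)⁻¹ * ∫ s in a..b, f s ^ 2) := by gcongr
    _ = (b - a) * ∫ s in a..b, f s ^ 2 := by field_simp

theorem taylor_one_integral_remainder {g : ℝ → ℝ} (hg : ContDiff ℝ 2 g) (a b : ℝ) :
    g b = g a + (b - a) * deriv g a + ∫ s in a..b, (b - s) * deriv (deriv g) s := by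
  have hg' : ContDiff ℝ 1 (deriv g) := hg.iterate_deriv' 1 1
  have hg'' : Continuous (deriv (deriv g)) := (hg.iterate_deriv' 0 2).continuous
  have hprimitive : ∀ s, HasDerivAt (fun s ↦ g s + (b - s) * deriv g s)
      ((b - s) * deriv (deriv g) s) s := by
    intro s
    have h1 := (hg.differentiable two_ne_zero s).hasDerivAt
    have h2 := (hg'.differentiable one_ne_zero s).hasDerivAt
    exact (h1.fun_add (((hasDerivAt_id' s).const_sub b).fun_mul h2)).congr_deriv (by ring)
  have hint : IntervalIntegrable (fun s ↦ (b - s) * deriv (deriv g) s) volume a b :=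
    ((continuous_const.sub continuous_id).mul hg'').intervalIntegrable a b
  rw [intervalIntegral.integral_eq_sub_of_hasDerivAt (fun s _ ↦ hprimitive s) hint]
  ring

theorem abs_intervalIntegral_mul_le {k G : ℝ → ℝ} {a b M : ℝ} (hab : a ≤ b)
    (hG : IntervalIntegrable G volume a b) (hk : ∀ s ∈ Icc a b, |k s| ≤ M) :
    |∫ s in a..b, k s * G s| ≤ M * ∫ s in a..b, |G s| := by
  rw [← intervalIntegral.integral_const_mul, ← Real.norm_eq_abs]
  refine intervalIntegral.norm_integral_le_of_norm_le hab (.of_forall fun s hs ↦ ?_)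
    (hG.abs.const_mul M)
  rw [Real.norm_eq_abs, abs_mul]
  gcongr
  exact hk s (Ioc_subset_Icc_self hs)

theorem abs_crankNicolson_remainder_le {g : ℝ → ℝ} (hg : ContDiff ℝ 2 g) (t : ℝ)
    {τ : ℝ} (hτ : 0 < τ) :
    |(3 * g (t + τ) + g (t - τ)) / 4 - g (t + τ / 2)| ≤
      3 * τ / 8 * ∫ s in (t - τ)..(t + τ), |deriv (deriv g) s| := by
  set G := deriv (deriv g)
  have hG : Continuous G := (hg.iterate_deriv' 0 2).continuous
  set c := t + τ / 2 with hc
  have hmidpoint : (3 * g (t + τ) + g (t - τ)) / 4 - g c =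
      (3 * ∫ s in c..(t + τ), (t + τ - s) * G s) / 4 -
        (∫ s in (t - τ)..c, (t - τ - s) * G s) / 4 := by
    rw [taylor_one_integral_remainder hg c (t + τ), taylor_one_integral_remainder hg c (t - τ),
      intervalIntegral.integral_symm c]
    ring
  have hright := abs_intervalIntegral_mul_le (k := fun s ↦ t + τ - s) (M := τ / 2)
    (by linarith [hc] : c ≤ t + τ) (hG.intervalIntegrable _ _)
    (fun s hs ↦ abs_le.2 ⟨by linarith [hs.2, hc], by linarith [hs.1, hc]⟩)
  have hleft := abs_intervalIntegral_mul_le (k := fun s ↦ t - τ - s) (M := 3 * τ / 2)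
    (by linarith [hc] : t - τ ≤ c) (hG.intervalIntegrable _ _)
    (fun s hs ↦ abs_le.2 ⟨by linarith [hs.2, hc], by linarith [hs.1, hc]⟩)
  rw [hmidpoint, ← intervalIntegral.integral_add_adjacent_intervals (μ := volume)
    (hG.abs.intervalIntegrable (t - τ) c) (hG.abs.intervalIntegrable c (t + τ))]
  rw [abs_le] at hright hleft ⊢
  constructor <;> linarith [hright.1, hright.2, hleft.1, hleft.2]

theorem stmt_9 (g : ℝ → ℝ) (hg : ContDiff ℝ 2 g) (t τ : ℝ) (hτ : 0 < τ) :
    |(3 * g (t + τ) + g (t - τ)) / 4 - g (t + τ / 2)| ^ 2 ≤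
      2 * τ ^ 3 * ∫ s in (t - τ)..(t + τ), |deriv (deriv g) s| ^ 2 := by
  have hG : Continuous fun s ↦ |deriv (deriv g) s| := (hg.iterate_deriv' 0 2).continuous.abs
  have hab : t - τ ≤ t + τ := by linarith
  have hCS := sq_intervalIntegral_le hab (hG.intervalIntegrable _ _)
    ((hG.pow 2).intervalIntegrable _ _)
  have hK : 0 ≤ ∫ s in (t - τ)..(t + τ), |deriv (deriv g) s| ^ 2 :=
    intervalIntegral.integral_nonneg hab fun _ _ ↦ sq_nonneg _
  calc |(3 * g (t + τ) + g (t - τ)) / 4 - g (t + τ / 2)| ^ 2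
      ≤ (3 * τ / 8 * ∫ s in (t - τ)..(t + τ), |deriv (deriv g) s|) ^ 2 :=
        pow_le_pow_left₀ (abs_nonneg _) (abs_crankNicolson_remainder_le hg t hτ) 2
    _ = 9 * τ ^ 2 / 64 * (∫ s in (t - τ)..(t + τ), |deriv (deriv g) s|) ^ 2 := by ring
    _ ≤ 9 * τ ^ 2 / 64 *
          ((t + τ - (t - τ)) * ∫ s in (t - τ)..(t + τ), |deriv (deriv g) s| ^ 2) := by
        gcongr
    _ ≤ 2 * τ ^ 3 * ∫ s in (t - τ)..(t + τ), |deriv (deriv g) s| ^ 2 := by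
        nlinarith [mul_nonneg (pow_pos hτ 3).le hK]
end
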